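/- arXiv:1912.03320 — 2 statements merged into one kernel-verified Lean document; each statement's English description precedes it below -/
import Mathlib

section
/- Suppose a sequence (p_k)_{k≥0} of real numbers in [0,1] satisfies p_{k+1} ≤ L_k^{2(γ-1)}(p_k^2 + c_1 L_k^{-ε}) for all k, where L_k = L_{k-1}⌊L_{k-1}^{γ-1}⌋, L_0^{γ-1} ≥ 3, 0 < α ≤ ε/2, 1 < γ < 1 + α/(α+2), p_0 ≤ L_0^{-α}, and L_0^{2+2α-γα-2γ} ≥ c_1 + 1 with c_1 ≥ 0. Then p_k ≤ L_k^{-α} for all k ≥ 0. -/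
/-- The inductive contraction estimate: under the recursive inequality
p_{k+1} ≤ L_k^{2(γ-1)}(p_k² + c₁ L_k^{-ε}), one has p_k ≤ L_k^{-α} for all k. -/
theorem stmt4 (ε α γ c₁ : ℝ) (hε : 0 < ε) (hα : α ∈ Set.Ioc 0 (ε / 2))
    (hγ : γ ∈ Set.Ioo 1 (1 + α / (α + 2))) (hc₁ : 0 ≤ c₁)
    (L : ℕ → ℕ) (hL0 : 1 ≤ L 0)
    (hL0' : (3 : ℝ) ≤ (L 0 : ℝ) ^ (γ - 1))
    (hL0'' : c₁ + 1 ≤ (L 0 : ℝ) ^ (2 + 2 * α - γ * α - 2 * γ))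
    (hrec : ∀ k, L (k + 1) = L k * ⌊(L k : ℝ) ^ (γ - 1)⌋₊)
    (p : ℕ → ℝ) (hp : ∀ k, p k ∈ Set.Icc (0 : ℝ) 1)
    (hp0 : p 0 ≤ (L 0 : ℝ) ^ (-α))
    (hprec : ∀ k, p (k + 1) ≤ (L k : ℝ) ^ (2 * (γ - 1)) * ((p k) ^ 2 + c₁ * (L k : ℝ) ^ (-ε))) :
    ∀ k, p k ≤ (L k : ℝ) ^ (-α) := by
  obtain ⟨hα0, hα2⟩ := hα
  obtain ⟨hγ1, hγ2⟩ := hγ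
  -- L is increasing from L 0
  have hLmono : ∀ k, L 0 ≤ L k := by
    intro k
    induction k with
    | zero => exact le_rfl
    | succ n ih =>
      have h1 : (1 : ℝ) ≤ (L n : ℝ) := by exact_mod_cast le_trans hL0 ih
      have h3 : (3 : ℝ) ≤ (L n : ℝ) ^ (γ - 1) := by
        calc (3 : ℝ) ≤ (L 0 : ℝ) ^ (γ - 1) := hL0'
          _ ≤ (L n : ℝ) ^ (γ - 1) := by
            apply Real.rpow_le_rpow (by positivity) (by exact_mod_cast ih) (by linarith)
      have h3' : 3 ≤ ⌊(L n : ℝ) ^ (γ - 1)⌋₊ := Nat.le_floor (by exact_mod_cast h3)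
      calc L 0 ≤ L n := ih
        _ ≤ L n * ⌊(L n : ℝ) ^ (γ - 1)⌋₊ :=
          Nat.le_mul_of_pos_right _ (by omega)
        _ = L (n + 1) := (hrec n).symm
  have hL1 : ∀ k, (1 : ℝ) ≤ (L k : ℝ) := fun k => by
    exact_mod_cast le_trans hL0 (hLmono k)
  have hLpos : ∀ k, (0 : ℝ) < (L k : ℝ) := fun k => lt_of_lt_of_le one_pos (hL1 k)
  -- exponent e := 2 + 2α - γα - 2γ is positive
  have he : 0 < 2 + 2 * α - γ * α - 2 * γ := by
    have h : γ * (α + 2) < (1 + α / (α + 2)) * (α + 2) := by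
      apply mul_lt_mul_of_pos_right hγ2 (by linarith)
    have : (1 + α / (α + 2)) * (α + 2) = α + 2 + α := by
      field_simp
    nlinarith [h]
  intro k
  induction k with
  | zero => exact hp0
  | succ n ih =>
    set x : ℝ := (L n : ℝ) with hx
    have hx1 : (1 : ℝ) ≤ x := hL1 n
    have hxpos : (0 : ℝ) < x := hLpos n
    have hp0n : 0 ≤ p n := (hp n).1
    -- step 1: p n ^ 2 ≤ x ^ (-(2*α))
    have h1 : p n ^ 2 ≤ x ^ (-(2 * α)) := by
      have : p n ^ 2 ≤ (x ^ (-α)) ^ 2 := by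
        apply pow_le_pow_left₀ hp0n ih
      calc p n ^ 2 ≤ (x ^ (-α)) ^ 2 := this
        _ = x ^ (-(2 * α)) := by
          rw [← Real.rpow_natCast (x ^ (-α)) 2, ← Real.rpow_mul hxpos.le]
          ring_nf
    -- step 2: x^(-ε) ≤ x^(-(2α))
    have h2 : x ^ (-ε) ≤ x ^ (-(2 * α)) := by
      apply Real.rpow_le_rpow_of_exponent_le hx1 (by linarith)
    -- combine
    have h3 : p (n + 1) ≤ (1 + c₁) * x ^ (2 * (γ - 1) + -(2 * α)) := by
      calc p (n + 1) ≤ x ^ (2 * (γ - 1)) * (p n ^ 2 + c₁ * x ^ (-ε)) := hprec n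
        _ ≤ x ^ (2 * (γ - 1)) * (x ^ (-(2 * α)) + c₁ * x ^ (-(2 * α))) := by
          apply mul_le_mul_of_nonneg_left _ (by positivity)
          have := mul_le_mul_of_nonneg_left h2 hc₁
          linarith
        _ = (1 + c₁) * (x ^ (2 * (γ - 1)) * x ^ (-(2 * α))) := by ring
        _ = (1 + c₁) * x ^ (2 * (γ - 1) + -(2 * α)) := by
          rw [Real.rpow_add hxpos]
    -- c₁ + 1 ≤ x ^ e
    have h4 : c₁ + 1 ≤ x ^ (2 + 2 * α - γ * α - 2 * γ) := by
      refine le_trans hL0'' ?_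
      have hcast : ((L 0 : ℕ) : ℝ) ≤ x := by
        show ((L 0 : ℕ) : ℝ) ≤ ((L n : ℕ) : ℝ)
        exact_mod_cast hLmono n
      exact Real.rpow_le_rpow (by positivity) hcast he.le
    have h5 : p (n + 1) ≤ x ^ (-(γ * α)) := by
      calc p (n + 1) ≤ (1 + c₁) * x ^ (2 * (γ - 1) + -(2 * α)) := h3
        _ ≤ x ^ (2 + 2 * α - γ * α - 2 * γ) * x ^ (2 * (γ - 1) + -(2 * α)) := by
          apply mul_le_mul_of_nonneg_right (by linarith) (by positivity)
        _ = x ^ (-(γ * α)) := by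
          rw [← Real.rpow_add hxpos]; ring_nf
    have hmul : x * x ^ (γ - 1) = x ^ γ := by
      nth_rewrite 1 [← Real.rpow_one x]
      rw [← Real.rpow_add hxpos]; norm_num
    have h6 : (L (n + 1) : ℝ) ≤ x ^ γ := by
      rw [hrec n]
      push_cast
      rw [← hmul]
      exact mul_le_mul_of_nonneg_left (Nat.floor_le (by positivity)) hxpos.le
    have h7 : (x ^ γ) ^ (-α) ≤ (L (n + 1) : ℝ) ^ (-α) :=
      Real.rpow_le_rpow_of_nonpos (hLpos (n + 1)) h6 (by linarith)
    calc p (n + 1) ≤ x ^ (-(γ * α)) := h5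
      _ = (x ^ γ) ^ (-α) := by
        rw [← Real.rpow_mul hxpos.le]; ring_nf
      _ ≤ (L (n + 1) : ℝ) ^ (-α) := h7
end

section
/- Let γ > 1, μ ∈ (1/γ, 1), β ∈ (γμ−γ+1, 1), and L_k the scale sequence with L_k ≥ (2/3)^k L_0^{γ^k} and L_k ≤ L_{k-1}^γ, L_0^{γ-1} ≥ 3. Then there exists c such that for all k ≥ c: exp(L_k^{γβ}) · exp(−exp(−9L_k + (2/3)^μ L_k^{γμ})) ≤ 1. -/
/-- Contraction estimate concluding the horizontal-crossing induction step:
for k large, exp(L_k^{γβ}) · exp(−exp(−9L_k + (2/3)^μ L_k^{γμ})) ≤ 1. -/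
theorem stmt17 (γ μ β : ℝ) (hγ : 1 < γ) (hμ : μ ∈ Set.Ioo (1 / γ) 1)
    (hβ : β ∈ Set.Ioo (γ * μ - γ + 1) 1)
    (L : ℕ → ℕ) (hL0 : 1 ≤ L 0)
    (hL0' : (3 : ℝ) ≤ (L 0 : ℝ) ^ (γ - 1))
    (hlow : ∀ k, (2 / 3 : ℝ) ^ k * (L 0 : ℝ) ^ (γ ^ k) ≤ (L k : ℝ))
    (hup : ∀ k, (L (k + 1) : ℝ) ≤ (L k : ℝ) ^ γ) :
    ∃ c : ℕ, ∀ k, c ≤ k →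
      Real.exp ((L k : ℝ) ^ (γ * β))
        * Real.exp (-Real.exp (-9 * (L k : ℝ) + (2 / 3 : ℝ) ^ μ * (L k : ℝ) ^ (γ * μ)))
        ≤ 1 := by
  have hb : (1:ℝ) ≤ (L 0 : ℝ) := by exact_mod_cast hL0
  have hpos : (0:ℝ) < (L 0 : ℝ) := by linarith
  -- Step 1: L k ≥ 2^k
  have key : ∀ k : ℕ, (2:ℝ)^k ≤ (L k : ℝ) := by
    intro k
    have hγk : (1 : ℝ) + k * (γ - 1) ≤ γ ^ k := by
      have := one_add_mul_le_pow (a := γ - 1) (by linarith) k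
      simpa [mul_comm] using this
    have h1 : (L 0 : ℝ) ^ ((1:ℝ) + (γ - 1) * k) ≤ (L 0 : ℝ) ^ (γ ^ k) :=
      Real.rpow_le_rpow_of_exponent_le hb (by rw [mul_comm]; exact hγk)
    have h2 : (L 0 : ℝ) ^ ((1:ℝ) + (γ - 1) * k) =
        (L 0 : ℝ) * ((L 0 : ℝ) ^ (γ - 1)) ^ k := by
      rw [Real.rpow_add hpos, Real.rpow_one, Real.rpow_mul hpos.le,
        Real.rpow_natCast]
    have h3 : (3:ℝ)^k * (L 0 : ℝ) ≤ (L 0 : ℝ) ^ (γ ^ k) := by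
      calc (3:ℝ)^k * (L 0 : ℝ) ≤ ((L 0 : ℝ) ^ (γ - 1)) ^ k * (L 0 : ℝ) := by
            gcongr
          _ = (L 0 : ℝ) ^ ((1:ℝ) + (γ - 1) * k) := by rw [h2]; ring
          _ ≤ (L 0 : ℝ) ^ (γ ^ k) := h1
    calc (2:ℝ)^k ≤ (2:ℝ)^k * (L 0 : ℝ) := le_mul_of_one_le_right (by positivity) hb
      _ = (2/3:ℝ)^k * ((3:ℝ)^k * (L 0 : ℝ)) := by
          rw [← mul_assoc, ← mul_pow]; norm_num
      _ ≤ (2/3:ℝ)^k * ((L 0 : ℝ) ^ (γ ^ k)) := by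
          gcongr
      _ ≤ (L k : ℝ) := hlow k
  -- Step 2: L k → ∞
  have hLtend : Filter.Tendsto (fun k => (L k : ℝ)) Filter.atTop Filter.atTop :=
    Filter.tendsto_atTop_mono key (tendsto_pow_atTop_atTop_of_one_lt (by norm_num : (1:ℝ) < 2))
  have ha : 1 < γ * μ := by
    have h1 : γ * (1/γ) < γ * μ := by
      have := hμ.1
      have hγ0 : (0:ℝ) < γ := by linarith
      exact mul_lt_mul_of_pos_left hμ.1 hγ0
    have hγ0 : γ ≠ 0 := by positivity
    rwa [mul_one_div, div_self hγ0] at h1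
  -- Step 3: eventually L k is large enough
  have hrt : Filter.Tendsto (fun k => (L k : ℝ) ^ (γ * μ - 1)) Filter.atTop Filter.atTop :=
    (tendsto_rpow_atTop (by linarith : (0:ℝ) < γ * μ - 1)).comp hLtend
  have hev : ∀ᶠ k in Filter.atTop,
      (3/2 * (|γ*β| + 9) ≤ (L k : ℝ) ^ (γ * μ - 1)) ∧ 1 ≤ (L k : ℝ) :=
    (hrt.eventually_ge_atTop _).and (hLtend.eventually_ge_atTop 1)
  obtain ⟨c, hc⟩ := Filter.eventually_atTop.mp hev
  refine ⟨c, fun k hk => ?_⟩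
  obtain ⟨hM, hx1⟩ := hc k hk
  set x : ℝ := (L k : ℝ) with hxdef
  have hxpos : 0 < x := lt_of_lt_of_le one_pos hx1
  -- main inequality
  rw [← Real.exp_add]
  have : x ^ (γ * β) + -Real.exp (-9 * x + (2/3:ℝ) ^ μ * x ^ (γ * μ)) ≤ 0 := by
    have hlog : x ^ (γ * β) = Real.exp (Real.log x * (γ * β)) :=
      Real.rpow_def_of_pos hxpos _
    have hmain : Real.log x * (γ * β) ≤ -9 * x + (2/3:ℝ) ^ μ * x ^ (γ * μ) := by
      have hlogx : Real.log x ≤ x := by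
        have := Real.log_le_sub_one_of_pos hxpos
        linarith
      have hlog0 : 0 ≤ Real.log x := Real.log_nonneg hx1
      have h1 : Real.log x * (γ * β) ≤ x * |γ * β| := by
        calc Real.log x * (γ * β) ≤ Real.log x * |γ * β| := by
              exact mul_le_mul_of_nonneg_left (le_abs_self _) hlog0
          _ ≤ x * |γ * β| := by
              exact mul_le_mul_of_nonneg_right hlogx (abs_nonneg _)
      have h2 : (2/3:ℝ) ≤ (2/3:ℝ) ^ μ := by
        have := Real.rpow_le_rpow_of_exponent_ge (by norm_num : (0:ℝ) < 2/3)
          (by norm_num : (2/3:ℝ) ≤ 1) (le_of_lt hμ.2)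
        simpa using this
      have hxa : x ^ (γ * μ - 1) * x = x ^ (γ * μ) := by
        rw [← Real.rpow_add_one hxpos.ne']
        ring_nf
      have h4 : (|γ*β| + 9) * x ≤ (2/3:ℝ) * x ^ (γ * μ) := by
        have h5 : (3/2 * (|γ*β| + 9)) * x ≤ x ^ (γ * μ - 1) * x :=
          mul_le_mul_of_nonneg_right hM (by linarith)
        rw [hxa] at h5
        linarith
      have h6 : (2/3:ℝ) * x ^ (γ * μ) ≤ (2/3:ℝ) ^ μ * x ^ (γ * μ) :=
        mul_le_mul_of_nonneg_right h2 (Real.rpow_nonneg hxpos.le _)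
      nlinarith [abs_nonneg (γ*β)]
    rw [hlog]
    have hexp : Real.exp (Real.log x * (γ * β)) ≤
        Real.exp (-9 * x + (2/3:ℝ) ^ μ * x ^ (γ * μ)) := Real.exp_le_exp.mpr hmain
    linarith
  calc Real.exp (x ^ (γ * β) + -Real.exp (-9 * x + (2/3:ℝ) ^ μ * x ^ (γ * μ)))
      ≤ Real.exp 0 := Real.exp_le_exp.mpr this
    _ = 1 := Real.exp_zero
end
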